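/- arXiv:math/0108206 — 2 statements merged into one kernel-verified Lean document; each statement's English description precedes it below -/
import Mathlib

section
/- Let p be a prime, a ≥ 1, and n = p^a. For any c : Fin n → ℤ, the determinant of the circulant matrix of c is congruent modulo p to the sum of the n-th powers of the entries: det(circulant c) ≡ (c 0)^n + (c 1)^n + ⋯ + (c (n−1))^n (mod p). -/
/-!
The circulant matrix of `v` is `f(P)` for the cyclic shift `P` and `f = ∑ vᵢ Xⁱ`. With
`q = pᵃ = n`, Frobenius in characteristic `p` gives `f(P)^q = ∑ vᵢ^q P^(iq) = (∑ vᵢ^q) • 1`,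
since `P^n = 1`. Taking determinants, `det(f(P))^q = (∑ vᵢ^q)^q`, and over a reduced ring such as
`ZMod p` the `q`-th power map is injective.
-/

open Polynomial Fin.NatCast

namespace Matrix

variable {R : Type*}

lemma circulant_single_one_pow [Semiring R] {n : ℕ} [NeZero n] (k : ℕ) :
    circulant (Pi.single 1 1 : Fin n → R) ^ k = circulant (Pi.single (k : Fin n) 1) := by
  induction k with
  | zero => simp
  | succ k ih =>
    rw [pow_succ, ih, circulant_mul, mulVec_single_one]
    ext i j
    simp only [circulant_apply, col_apply, Pi.single_apply, Nat.cast_succ, sub_eq_iff_eq_add,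
      add_assoc, add_comm (1 : Fin n)]

lemma circulant_eq_sum_smul_pow [Semiring R] {n : ℕ} [NeZero n] (v : Fin n → R) :
    circulant v = ∑ i, v i • circulant (Pi.single 1 1 : Fin n → R) ^ (i : ℕ) := by
  ext j k
  simp [circulant_single_one_pow, sum_apply, circulant_apply, Pi.single_apply]

lemma circulant_pow_expChar_pow [CommSemiring R] (p a : ℕ) [ExpChar R p]
    (v : Fin (p ^ a) → R) : circulant v ^ p ^ a = (∑ i, v i ^ p ^ a) • 1 := by
  have : NeZero (p ^ a) := ⟨(expChar_pow_pos R p a).ne'⟩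
  set P := circulant (Pi.single 1 1 : Fin (p ^ a) → R)
  have hP : P ^ p ^ a = 1 := by
    rw [circulant_single_one_pow, Fin.natCast_self, circulant_single_one]
  have hv : circulant v = aeval P (∑ i, C (v i) * X ^ (i : ℕ)) := by
    rw [circulant_eq_sum_smul_pow]
    simp [Algebra.smul_def, P]
  rw [hv, ← map_pow, sum_pow_char_pow, map_sum, Finset.sum_smul]
  refine Finset.sum_congr rfl fun i _ => ?_
  rw [mul_pow, ← C_pow, ← pow_mul, map_mul, aeval_C, aeval_X_pow, mul_comm, pow_mul, hP,
    one_pow, Algebra.algebraMap_eq_smul_one, smul_one_mul]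

lemma det_circulant_eq_sum_pow [CommRing R] [IsReduced R] (p a : ℕ) [ExpChar R p]
    (v : Fin (p ^ a) → R) : (circulant v).det = ∑ i, v i ^ p ^ a := by
  apply iterateFrobenius_inj R p a
  rw [iterateFrobenius_def, iterateFrobenius_def, ← det_pow, circulant_pow_expChar_pow,
    det_smul, det_one, mul_one, Fintype.card_fin]

end Matrix

theorem circulant_det_modeq_sum_pow_general (p a : ℕ) (hp : p.Prime)
    (n : ℕ) (hn : n = p ^ a) (c : Fin n → ℤ) :
    (Matrix.circulant c).det ≡ (∑ i, c i ^ n) [ZMOD (p : ℤ)] := by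
  subst hn
  have : Fact p.Prime := ⟨hp⟩
  rw [← ZMod.intCast_eq_intCast_iff, Int.cast_det, Matrix.map_circulant]
  push_cast
  exact Matrix.det_circulant_eq_sum_pow p a _

theorem circulant_det_modeq_sum_pow (p a : ℕ) (hp : p.Prime) (ha : 1 ≤ a)
    (n : ℕ) (hn : n = p ^ a) (c : Fin n → ℤ) :
    (Matrix.circulant c).det ≡ (∑ i, c i ^ n) [ZMOD (p : ℤ)] :=
  circulant_det_modeq_sum_pow_general p a hp n hn c
end

section
/- Let p be a prime, a ≥ 1, and n = p^a. For any c : Fin n → ℤ, the determinant of the circulant matrix of c is congruent modulo p to the sum of the entries: det(circulant c) ≡ c 0 + c 1 + ⋯ + c (n−1) (mod p). In particular, if the entries sum to 1 then det(circulant c) ≡ 1 (mod p). -/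
/-!
Circulant matrices over a commutative ring commute with each other, so in characteristic `p`
raising `circulant c = ∑ g, c g • S_g` (with `S_g` the shift by `g`) to the power `p ^ a`
acts termwise: `(circulant c) ^ p ^ a = ∑ g, c g ^ p ^ a • S_(p ^ a • g)`. When `p ^ a` kills
the index group this is a scalar matrix, and over `ZMod p`, where `x ^ p ^ a = x`, taking
determinants gives `det (circulant c) = ∑ g, c g`.
-/

open Matrix

theorem Finset.sum_pow_expChar_pow_of_commute {ι R : Type*} [Semiring R] (p n : ℕ) [ExpChar R p]
    (s : Finset ι) (f : ι → R) (hf : ∀ i j, Commute (f i) (f j)) :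
    (∑ i ∈ s, f i) ^ p ^ n = ∑ i ∈ s, f i ^ p ^ n := by
  classical
  induction s using Finset.induction_on with
  | empty => simp [zero_pow (expChar_pow_pos R p n).ne']
  | insert i s hi ih =>
    rw [sum_insert hi, sum_insert hi, ← ih]
    exact add_pow_expChar_pow_of_commute p n (Commute.sum_right _ _ _ fun j _ => hf i j)

namespace Matrix

variable {G R : Type*}

theorem circulant_sum [AddCommMonoid R] [Sub G] {ι : Type*} (s : Finset ι) (v : ι → G → R) :
    circulant (∑ i ∈ s, v i) = ∑ i ∈ s, circulant (v i) := by
  ext; simp [Matrix.sum_apply]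

variable [AddCommGroup G] [Fintype G] [DecidableEq G]

theorem circulant_single_mul_circulant_single [Semiring R] (g h : G) (a b : R) :
    circulant (Pi.single g a) * circulant (Pi.single h b) =
      circulant (Pi.single (g + h) (a * b)) := by
  rw [circulant_mul]
  congr 1
  ext i
  simp [mulVec, dotProduct, Pi.single_apply, sub_eq_iff_eq_add, add_comm g h]

theorem circulant_single_pow [Semiring R] (g : G) (a : R) (m : ℕ) :
    circulant (Pi.single g a) ^ m = circulant (Pi.single (m • g) (a ^ m)) := by
  induction m with
  | zero => simp
  | succ m ih => rw [pow_succ, ih, circulant_single_mul_circulant_single, succ_nsmul, pow_succ]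

theorem circulant_pow_char_pow [CommRing R] (p n : ℕ) [Fact p.Prime] [CharP R p]
    (hG : ∀ g : G, p ^ n • g = 0) (v : G → R) :
    circulant v ^ p ^ n = scalar G (∑ g, v g ^ p ^ n) := by
  conv_lhs => rw [← Finset.univ_sum_single v, circulant_sum]
  rw [Finset.sum_pow_expChar_pow_of_commute _ _ _ _ fun g h =>
    circulant_mul_comm (v := Pi.single g (v g)) _]
  simp_rw [circulant_single_pow, hG, circulant_single, map_sum]

theorem det_circulant_eq_sum_of_card_eq_prime_pow {p a : ℕ} [Fact p.Prime]
    (hG : Fintype.card G = p ^ a) (v : G → ZMod p) :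
    (circulant v).det = ∑ g, v g := by
  have key := congrArg det (circulant_pow_char_pow p a (fun g => hG ▸ card_nsmul_eq_zero) v)
  simp_rw [det_pow, ZMod.pow_card_pow, scalar_apply, det_diagonal, Finset.prod_const,
    Finset.card_univ, hG, ZMod.pow_card_pow] at key
  exact key

end Matrix

theorem circulant_det_modeq_sum_general (p a : ℕ) (hp : p.Prime)
    (n : ℕ) (hn : n = p ^ a) (c : Fin n → ℤ) :
    ((Matrix.circulant c).det ≡ (∑ i, c i) [ZMOD (p : ℤ)]) ∧
      ((∑ i, c i) = 1 → (Matrix.circulant c).det ≡ 1 [ZMOD (p : ℤ)]) := by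
  have : Fact p.Prime := ⟨hp⟩
  have : NeZero n := ⟨hn ▸ pow_ne_zero a hp.ne_zero⟩
  have key : (Matrix.circulant c).det ≡ ∑ i, c i [ZMOD p] := by
    rw [← ZMod.intCast_eq_intCast_iff, ← eq_intCast (Int.castRingHom (ZMod p)), RingHom.map_det,
      RingHom.mapMatrix_apply, map_circulant, Int.cast_sum]
    exact det_circulant_eq_sum_of_card_eq_prime_pow (by rw [Fintype.card_fin, hn]) _
  exact ⟨key, fun hsum => hsum ▸ key⟩

theorem circulant_det_modeq_sum (p a : ℕ) (hp : p.Prime) (ha : 1 ≤ a)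
    (n : ℕ) (hn : n = p ^ a) (c : Fin n → ℤ) :
    ((Matrix.circulant c).det ≡ (∑ i, c i) [ZMOD (p : ℤ)]) ∧
      ((∑ i, c i) = 1 → (Matrix.circulant c).det ≡ 1 [ZMOD (p : ℤ)]) :=
  circulant_det_modeq_sum_general p a hp n hn c
end
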